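/- Let μ be the Haar probability measure on the compact topological group ℕ → ZMod 2 (equivalently, the fair-coin product measure on Cantor space), and let G₁ be the graph on this space in which distinct x, y are adjacent iff x(n) = y(n) for all but finitely many n. Then every μ-measurable G₁-independent set is μ-null. Consequently, G₁ admits no proper coloring with countably many colors in which every color class is μ-measurable; in particular the Lebesgue-measurable chromatic number of G₁ is uncountable. -/

import Mathlib

/-!
A set of positive measure for a finite translation-invariant measure cannot have infinitely many
pairwise disjoint translates, since they all have the same measure. Translating by the unit
vectors `Pi.single n 1` gives infinitely many translates of `A`, and any two of them meet in a
point `x` with `Pi.single m 1 + x, Pi.single n 1 + x ∈ A`; these two points differ exactly in the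
coordinates `m ≠ n`, so they are `G₁`-adjacent. Hence measurable independent sets are null, and
countably many null colour classes cannot cover a probability space.
-/

open MeasureTheory

/-- Adjacency in the graph `G₁` on `ℕ → ZMod 2`: distinct points are adjacent
iff they differ in only finitely many coordinates. -/
def G1Adj (x y : ℕ → ZMod 2) : Prop :=
  x ≠ y ∧ {n | x n ≠ y n}.Finite

theorem exists_ne_add_mem_add_mem_of_measure_ne_zero {G ι : Type*} [AddGroup G]
    [MeasurableSpace G] [MeasurableAdd G] {μ : Measure G} [IsFiniteMeasure μ]
    [μ.IsAddLeftInvariant] [Infinite ι] {A : Set G} (hA : NullMeasurableSet A μ)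
    (hA₀ : μ A ≠ 0) (g : ι → G) :
    ∃ i j, i ≠ j ∧ ∃ x, g i + x ∈ A ∧ g j + x ∈ A := by
  have hmeas i : NullMeasurableSet ((g i + ·) ⁻¹' A) μ :=
    hA.preimage (measurePreserving_add_left μ (g i)).quasiMeasurePreserving
  have hlt : μ Set.univ < ∑' i, μ ((g i + ·) ⁻¹' A) := by
    simp only [measure_preimage_add, ENNReal.tsum_const_eq_top_of_ne_zero hA₀]
    exact measure_lt_top μ _
  exact exists_nonempty_inter_of_measure_univ_lt_tsum_measure μ hmeas hlt

theorem G1Adj_single_add_single_add {m n : ℕ} (hmn : m ≠ n) (x : ℕ → ZMod 2) :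
    G1Adj (Pi.single m 1 + x) (Pi.single n 1 + x) := by
  refine ⟨fun h => ?_, (Set.finite_singleton m |>.insert n).subset fun k hk => ?_⟩
  · simpa [hmn] using congrFun h m
  · by_contra hk'
    simp only [Set.mem_insert_iff, Set.mem_singleton_iff, not_or] at hk'
    simp [Pi.single_apply, hk'.1, hk'.2] at hk

theorem measure_eq_zero_of_G1_independent {μ : Measure (ℕ → ZMod 2)} [IsFiniteMeasure μ]
    [μ.IsAddLeftInvariant] {A : Set (ℕ → ZMod 2)} (hA : NullMeasurableSet A μ)
    (hind : ∀ x ∈ A, ∀ y ∈ A, ¬G1Adj x y) : μ A = 0 := by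
  by_contra hA₀
  obtain ⟨m, n, hmn, x, hm, hn⟩ :=
    exists_ne_add_mem_add_mem_of_measure_ne_zero hA hA₀ fun n : ℕ => Pi.single n (1 : ZMod 2)
  exact hind _ hm _ hn (G1Adj_single_add_single_add hmn x)

/-- With respect to the Haar probability measure on the compact group
`ℕ → ZMod 2`, every measurable `G₁`-independent set is null; consequently
`G₁` admits no proper colouring with countably many measurable colour
classes, i.e. its measurable chromatic number is uncountable. -/
theorem G1_independent_null_and_measurable_chromatic_uncountable
    (μ : Measure (ℕ → ZMod 2)) [IsProbabilityMeasure μ]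
    [μ.IsAddHaarMeasure] :
    (∀ A : Set (ℕ → ZMod 2), NullMeasurableSet A μ →
      (∀ x ∈ A, ∀ y ∈ A, ¬G1Adj x y) → μ A = 0) ∧
    ¬∃ c : (ℕ → ZMod 2) → ℕ, (∀ x y, G1Adj x y → c x ≠ c y) ∧
        ∀ n, NullMeasurableSet (c ⁻¹' {n}) μ := by
  refine ⟨fun A => measure_eq_zero_of_G1_independent, ?_⟩
  rintro ⟨c, hc, hmeas⟩
  have hclass_null n : μ (c ⁻¹' {n}) = 0 :=
    measure_eq_zero_of_G1_independent (hmeas n) fun x hx y hy hxy =>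
      hc x y hxy (hx.trans hy.symm)
  have huniv : μ Set.univ = 0 :=
    (measure_preimage_eq_zero_iff_of_countable Set.countable_univ).2 fun n _ => hclass_null n
  simp at huniv
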